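/- Let φ: ℙ¹ → ℙ¹ be a morphism defined over K with good reduction at a place v, and let P ∈ ℙ¹(K) be a periodic point for φ with minimal period n. If i, j ∈ ℕ satisfy gcd(i − j, n) = 1, then δ_v(φ^i(P), φ^j(P)) = δ_v(φ(P), P). -/

import Mathlib

/-!
Good reduction makes `φ` non-expanding for `δ_v`. In normalized coordinates (integral, one of
them a unit) `δ_v(P, Q) = v(P₁Q₂ - Q₁P₂)`; this determinant divides the one of `φ(P), φ(Q)` with
an integral quotient, and `φ` keeps coordinates normalized because `Res(F, G)` times any monomial
of degree `2d - 1` is a combination of `F` and `G` with integral coefficients (Cramer's rule for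
the Sylvester matrix). Along a cycle of length `n`, a non-expanding map is an isometry, so
`δ_v(φⁱ(P), φʲ(P))` only depends on `i - j` modulo `n`. By the ultrametric inequality the `m` with
`δ_v(φᵐ(P), P) ≥ c` form an additive submonoid, hence a subgroup modulo `n`, and so all `m` prime
to `n` give the same value.
-/

noncomputable section

/-- The `v`-adic logarithmic distance between coordinate representatives of points of
`ℙ¹(K)`. -/
def logDist {K : Type} [Field K] (v : K → WithTop ℤ) (P Q : K × K) : WithTop ℤ :=
  v (P.1 * Q.2 - Q.1 * P.2) - min (v P.1) (v P.2) - min (v Q.1) (v Q.2)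

/-- Evaluation at a point of the pair of binary forms
`F(X,Y) = ∑ aᵢ Xⁱ Y^(d−i)`, `G(X,Y) = ∑ bᵢ Xⁱ Y^(d−i)` of degree `d`,
i.e. the map `φ([X:Y]) = [F(X,Y):G(X,Y)]` in homogeneous coordinates. -/
def evalPair {K : Type} [CommRing K] (d : ℕ) (a b : Fin (d+1) → K) (P : K × K) : K × K :=
  (∑ i : Fin (d+1), a i * P.1 ^ (i:ℕ) * P.2 ^ (d - (i:ℕ)),
   ∑ i : Fin (d+1), b i * P.1 ^ (i:ℕ) * P.2 ^ (d - (i:ℕ)))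

/-- The Sylvester matrix of the two binary forms of degree `d` with coefficient
vectors `a`, `b`. -/
def sylvester {K : Type} [CommRing K] (d : ℕ) (a b : Fin (d+1) → K) :
    Matrix (Fin (d+d)) (Fin (d+d)) K :=
  fun i j =>
    if _ : (i:ℕ) < d then
      if hj : (i:ℕ) ≤ (j:ℕ) ∧ (j:ℕ) ≤ (i:ℕ) + d then a ⟨(j:ℕ) - (i:ℕ), by omega⟩ else 0
    else
      if hj : (i:ℕ) - d ≤ (j:ℕ) ∧ (j:ℕ) ≤ (i:ℕ) then b ⟨(j:ℕ) - ((i:ℕ) - d), by omega⟩ else 0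

/-- The (homogeneous) resultant `Res(F,G)` of the two binary forms of degree `d`,
as the determinant of their Sylvester matrix. -/
def resultant {K : Type} [CommRing K] (d : ℕ) (a b : Fin (d+1) → K) : K :=
  (sylvester d a b).det

/-- The map `φ = [F:G]` has good reduction at the place `v`: after multiplying `F`
and `G` by a suitable nonzero scalar `u` (so as to be in `v`-reduced form: all
coefficients in the valuation ring of `v` and at least one of them a `v`-unit), the
resultant `Res(uF, uG)` is a `v`-unit. -/
def GoodReduction {K : Type} [Field K] (v : K → WithTop ℤ) (d : ℕ)
    (a b : Fin (d+1) → K) : Prop :=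
  ∃ u : K, u ≠ 0 ∧ (∀ i, 0 ≤ v (u * a i) ∧ 0 ≤ v (u * b i)) ∧
    ((∃ i, v (u * a i) = 0) ∨ (∃ i, v (u * b i) = 0)) ∧
    v (resultant d (fun i => u * a i) (fun i => u * b i)) = 0

-- Mathlib registers only the `SubtractionMonoid` instance; this one gives `sub_right_comm` and
-- `add_sub_add_comm` in `WithTop ℤ`.
instance LinearOrderedAddCommGroupWithTop.toSubtractionCommMonoid {α : Type*}
    [LinearOrderedAddCommGroupWithTop α] : SubtractionCommMonoid α where
  add_comm := add_comm

def cross {R : Type*} [CommRing R] (P Q : R × R) : R := P.1 * Q.2 - Q.1 * P.2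

def IsNormalized {R Γ : Type*} [CommRing R] [LinearOrderedAddCommMonoidWithTop Γ]
    (v : AddValuation R Γ) (P : R × R) : Prop :=
  min (v P.1) (v P.2) = 0

namespace IsNormalized

variable {R Γ : Type*} [CommRing R] [LinearOrderedAddCommMonoidWithTop Γ]
  {v : AddValuation R Γ} {P : R × R}

theorem fst_nonneg (hP : IsNormalized v P) : 0 ≤ v P.1 := hP ▸ min_le_left _ _

theorem snd_nonneg (hP : IsNormalized v P) : 0 ≤ v P.2 := hP ▸ min_le_right _ _

theorem fst_eq_zero_or_snd_eq_zero (hP : IsNormalized v P) : v P.1 = 0 ∨ v P.2 = 0 := by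
  rcases min_choice (v P.1) (v P.2) with h | h
  · exact .inl (h ▸ hP)
  · exact .inr (h ▸ hP)

end IsNormalized

theorem IsNormalized.ne_zero {R Γ : Type*} [CommRing R] [LinearOrderedAddCommGroupWithTop Γ]
    {v : AddValuation R Γ} {P : R × R} (hP : IsNormalized v P) : P ≠ 0 := by
  rintro rfl
  simp [IsNormalized] at hP

theorem exists_isNormalized_smul {K Γ : Type*} [Field K] [LinearOrderedAddCommGroupWithTop Γ]
    (v : AddValuation K Γ) {P : K × K} (hP : P ≠ 0) :
    ∃ c : K, c ≠ 0 ∧ IsNormalized v (c • P) := by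
  have hmin : min (v P.1) (v P.2) ≠ ⊤ := by
    contrapose! hP
    simp only [min_eq_top, v.top_iff] at hP
    exact Prod.ext hP.1 hP.2
  obtain ⟨t, ht⟩ : ∃ t, v t = min (v P.1) (v P.2) := by
    rcases min_choice (v P.1) (v P.2) with h | h
    exacts [⟨_, h.symm⟩, ⟨_, h.symm⟩]
  refine ⟨t⁻¹, inv_ne_zero (v.ne_top_iff.1 (ht ▸ hmin)), ?_⟩
  simp only [IsNormalized, Prod.smul_fst, Prod.smul_snd, smul_eq_mul, v.map_mul, v.map_inv,
    min_add_add_left, ← ht]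
  exact LinearOrderedAddCommGroupWithTop.neg_add_cancel_of_ne_top (ht ▸ hmin)

theorem min_map_cross_le {R Γ : Type*} [CommRing R] [LinearOrderedAddCommMonoidWithTop Γ]
    (v : AddValuation R Γ) {A B C : R × R} (hA : IsNormalized v A) (hB : IsNormalized v B)
    (hC : IsNormalized v C) :
    min (v (cross A B)) (v (cross B C)) ≤ v (cross A C) := by
  -- `B₁ · cross A C = C₁ · cross A B + A₁ · cross B C`, likewise with second coordinates,
  -- and `B₁` or `B₂` is a unit.
  suffices key : ∀ t s s' : R, t * cross A C = s * cross A B + s' * cross B C → v t = 0 →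
      0 ≤ v s → 0 ≤ v s' → min (v (cross A B)) (v (cross B C)) ≤ v (cross A C) by
    rcases hB.fst_eq_zero_or_snd_eq_zero with h | h
    · exact key B.1 C.1 A.1 (by unfold cross; ring) h hC.fst_nonneg hA.fst_nonneg
    · exact key B.2 C.2 A.2 (by unfold cross; ring) h hC.snd_nonneg hA.snd_nonneg
  intro t s s' hid ht hs hs'
  calc min (v (cross A B)) (v (cross B C))
      ≤ v (s * cross A B + s' * cross B C) := by
        refine v.map_le_add ?_ ?_ <;> rw [v.map_mul]
        · exact (min_le_left _ _).trans (le_add_of_nonneg_left hs)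
        · exact (min_le_right _ _).trans (le_add_of_nonneg_left hs')
    _ = v (cross A C) := by rw [← hid, v.map_mul, ht, zero_add]

section LogDist

variable {K : Type} [Field K] (v : AddValuation K (WithTop ℤ))

theorem logDist_comm (A B : K × K) : logDist v A B = logDist v B A := by
  rw [logDist, logDist, v.map_sub_swap, sub_right_comm]

theorem logDist_smul_left {c : K} (hc : c ≠ 0) (A B : K × K) :
    logDist v (c • A) B = logDist v A B := by
  simp only [logDist, Prod.smul_fst, Prod.smul_snd, smul_eq_mul,
    show c * A.1 * B.2 - B.1 * (c * A.2) = c * (A.1 * B.2 - B.1 * A.2) by ring, v.map_mul,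
    min_add_add_left, add_sub_add_comm,
    LinearOrderedAddCommGroupWithTop.sub_self_eq_zero_iff_ne_top.2 (v.ne_top_iff.2 hc), zero_add]

theorem logDist_smul_right {c : K} (hc : c ≠ 0) (A B : K × K) :
    logDist v A (c • B) = logDist v A B := by
  rw [logDist_comm, logDist_smul_left v hc, logDist_comm]

theorem logDist_smul_smul {α β : K} (hα : α ≠ 0) (hβ : β ≠ 0) (A B : K × K) :
    logDist v (α • A) (β • B) = logDist v A B := by
  rw [logDist_smul_left v hα, logDist_smul_right v hβ]

theorem logDist_eq_of_isNormalized {A B : K × K} (hA : IsNormalized v A)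
    (hB : IsNormalized v B) : logDist v A B = v (cross A B) := by
  rw [logDist, hA, hB, sub_zero, sub_zero, cross]

theorem min_logDist_le {A B C : K × K} (hA : A ≠ 0) (hB : B ≠ 0) (hC : C ≠ 0) :
    min (logDist v A B) (logDist v B C) ≤ logDist v A C := by
  obtain ⟨α, hα, hαA⟩ := exists_isNormalized_smul v hA
  obtain ⟨β, hβ, hβB⟩ := exists_isNormalized_smul v hB
  obtain ⟨γ, hγ, hγC⟩ := exists_isNormalized_smul v hC
  rw [← logDist_smul_smul v hα hβ A B, ← logDist_smul_smul v hβ hγ B C,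
    ← logDist_smul_smul v hα hγ A C,
    logDist_eq_of_isNormalized v hαA hβB, logDist_eq_of_isNormalized v hβB hγC,
    logDist_eq_of_isNormalized v hαA hγC]
  exact min_map_cross_le v hαA hβB hγC

end LogDist

section BinaryForms

variable {R : Type} [CommRing R] {d : ℕ} (a b : Fin (d+1) → R)

theorem evalPair_smul (c : R) (P : R × R) :
    evalPair d a b (c • P) = c ^ d • evalPair d a b P := by
  simp only [evalPair, Prod.smul_fst, Prod.smul_snd, smul_eq_mul, Prod.smul_mk, Finset.mul_sum]
  congr 1 <;> refine Finset.sum_congr rfl fun i _ => ?_ <;>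
    rw [← pow_mul_pow_sub c i.is_le] <;> ring

theorem evalPair_const_mul (u : R) (P : R × R) :
    evalPair d (fun i => u * a i) (fun i => u * b i) P = u • evalPair d a b P := by
  simp only [evalPair, Prod.smul_mk, smul_eq_mul, Finset.mul_sum, mul_assoc]

theorem iterate_evalPair_smul (c : R) (P : R × R) (k : ℕ) :
    (evalPair d a b)^[k] (c • P) = c ^ d ^ k • (evalPair d a b)^[k] P := by
  induction k generalizing c P with
  | zero => simp
  | succ k ih => rw [Function.iterate_succ_apply, Function.iterate_succ_apply, evalPair_smul, ih,
      ← pow_mul, pow_succ']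

variable {Γ : Type*} [LinearOrderedAddCommMonoidWithTop Γ] (v : AddValuation R Γ)

theorem map_mul_nonneg {x y : R} (hx : 0 ≤ v x) (hy : 0 ≤ v y) : 0 ≤ v (x * y) :=
  v.map_mul x y ▸ add_nonneg hx hy

theorem map_pow_mul_pow_nonneg {x y : R} (hx : 0 ≤ v x) (hy : 0 ≤ v y) (k m : ℕ) :
    0 ≤ v (x ^ k * y ^ m) :=
  map_mul_nonneg v (v.map_pow x k ▸ nsmul_nonneg hx k) (v.map_pow y m ▸ nsmul_nonneg hy m)

theorem map_form_nonneg {c : Fin (d+1) → R} (hc : ∀ i, 0 ≤ v (c i)) {P : R × R}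
    (hP : IsNormalized v P) : 0 ≤ v (∑ i : Fin (d+1), c i * P.1 ^ (i:ℕ) * P.2 ^ (d - i)) :=
  v.map_le_sum fun i _ => by
    rw [mul_assoc]
    exact map_mul_nonneg v (hc i) (map_pow_mul_pow_nonneg v hP.fst_nonneg hP.snd_nonneg _ _)

theorem exists_cross_monomial_eq_mul {P Q : R × R} (hP : IsNormalized v P)
    (hQ : IsNormalized v Q) {k l : ℕ} (hk : k ≤ d) (hl : l ≤ d) :
    ∃ h : R, 0 ≤ v h ∧ P.1 ^ k * P.2 ^ (d - k) * (Q.1 ^ l * Q.2 ^ (d - l)) -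
      Q.1 ^ k * Q.2 ^ (d - k) * (P.1 ^ l * P.2 ^ (d - l)) = cross P Q * h := by
  wlog hkl : k ≤ l generalizing k l
  · obtain ⟨h, hh, heq⟩ := this hl hk (le_of_not_ge hkl)
    exact ⟨-h, by rwa [v.map_neg], by linear_combination -heq⟩
  obtain ⟨m, rfl⟩ := Nat.exists_eq_add_of_le hkl
  obtain ⟨s, hs⟩ : ∃ s, d - k = s + m ∧ d - (k + m) = s := ⟨d - (k + m), by omega, rfl⟩
  -- the difference is `(P₁Q₁)ᵏ (P₂Q₂)ˢ ((Q₁P₂)ᵐ - (P₁Q₂)ᵐ)`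
  refine ⟨-((P.1 * Q.1) ^ k * (P.2 * Q.2) ^ s *
      ∑ t ∈ Finset.range m, (P.1 * Q.2) ^ t * (Q.1 * P.2) ^ (m - 1 - t)), ?_, ?_⟩
  · have h₁ := map_mul_nonneg v hP.fst_nonneg hQ.fst_nonneg
    have h₂ := map_mul_nonneg v hP.snd_nonneg hQ.snd_nonneg
    have h₁₂ := map_mul_nonneg v hP.fst_nonneg hQ.snd_nonneg
    have h₂₁ := map_mul_nonneg v hQ.fst_nonneg hP.snd_nonneg
    rw [v.map_neg]
    exact map_mul_nonneg v (map_pow_mul_pow_nonneg v h₁ h₂ k s)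
      (v.map_le_sum fun t _ => map_pow_mul_pow_nonneg v h₁₂ h₂₁ t _)
  · rw [hs.1, hs.2, cross]
    linear_combination ((P.1 * Q.1) ^ k * (P.2 * Q.2) ^ s) *
      geom_sum₂_mul (P.1 * Q.2) (Q.1 * P.2) m

theorem exists_cross_evalPair_eq_mul (hab : ∀ i, 0 ≤ v (a i) ∧ 0 ≤ v (b i)) {P Q : R × R}
    (hP : IsNormalized v P) (hQ : IsNormalized v Q) :
    ∃ h : R, 0 ≤ v h ∧ cross (evalPair d a b P) (evalPair d a b Q) = cross P Q * h := by
  choose h hh_nonneg hh using fun k l : Fin (d+1) =>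
    exists_cross_monomial_eq_mul v hP hQ k.is_le l.is_le
  refine ⟨∑ k, ∑ l, a k * b l * h k l,
    v.map_le_sum fun k _ => v.map_le_sum fun l _ => ?_, ?_⟩
  · exact map_mul_nonneg v (map_mul_nonneg v (hab k).1 (hab l).2) (hh_nonneg k l)
  · simp only [cross, evalPair] at hh ⊢
    rw [Finset.sum_mul_sum, Finset.sum_mul_sum, ← Finset.sum_sub_distrib, Finset.mul_sum]
    refine Finset.sum_congr rfl fun k _ => ?_
    rw [← Finset.sum_sub_distrib, Finset.mul_sum]
    refine Finset.sum_congr rfl fun l _ => ?_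
    linear_combination (a k * b l) * hh k l

theorem map_cross_le_map_cross_evalPair (hab : ∀ i, 0 ≤ v (a i) ∧ 0 ≤ v (b i))
    {P Q : R × R} (hP : IsNormalized v P) (hQ : IsNormalized v Q) :
    v (cross P Q) ≤ v (cross (evalPair d a b P) (evalPair d a b Q)) := by
  obtain ⟨h, hh, heq⟩ := exists_cross_evalPair_eq_mul a b v hab hP hQ
  rw [heq, v.map_mul]
  exact le_add_of_nonneg_right hh

end BinaryForms

section Resultant

open Matrix

variable {R : Type} [CommRing R]

theorem sum_dite_window {N d e f : ℕ} (hf : f = e + d) (hN : f < N) (c : Fin (d+1) → R)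
    (g : ℕ → R) :
    ∑ j : Fin N, (if h : e ≤ (j:ℕ) ∧ (j:ℕ) ≤ f then c ⟨j - e, by omega⟩ else 0) * g j =
      ∑ k : Fin (d+1), c k * g (e + k) := by
  refine (Fintype.sum_of_injective (fun k => ⟨e + k, by omega⟩)
    (fun k l h => Fin.ext (Nat.add_left_cancel (congrArg Fin.val h))) _ _
    (fun j hj => ?_) (fun k => ?_)).symm
  · rw [dif_neg, zero_mul]
    rintro ⟨h₁, h₂⟩
    exact hj ⟨⟨j - e, by omega⟩, Fin.ext (by simp; omega)⟩
  · rw [dif_pos (by simp; omega)]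
    simp

variable {d : ℕ} (a b : Fin (d+1) → R)

theorem sylvester_mulVec_apply (P : R × R) (i : Fin (d+d)) :
    (sylvester d a b *ᵥ fun j : Fin (d+d) => P.1 ^ (j:ℕ) * P.2 ^ (d + d - 1 - j)) i =
      if (i:ℕ) < d then P.1 ^ (i:ℕ) * P.2 ^ (d - 1 - i) * (evalPair d a b P).1
      else P.1 ^ ((i:ℕ) - d) * P.2 ^ (d - 1 - (i - d)) * (evalPair d a b P).2 := by
  have shift : ∀ {e k : ℕ}, e < d → k ≤ d → P.1 ^ (e + k) * P.2 ^ (d + d - 1 - (e + k)) =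
      P.1 ^ e * P.2 ^ (d - 1 - e) * (P.1 ^ k * P.2 ^ (d - k)) := by
    intro e k he hk
    rw [show d + d - 1 - (e + k) = (d - 1 - e) + (d - k) by omega]
    ring
  simp only [mulVec, dotProduct, sylvester, evalPair, Finset.mul_sum]
  split_ifs with hi
  · rw [sum_dite_window rfl (by omega) a (fun j => P.1 ^ j * P.2 ^ (d + d - 1 - j))]
    refine Finset.sum_congr rfl fun k _ => ?_
    rw [shift hi k.is_le]
    ring
  · rw [sum_dite_window (by omega) i.is_lt b (fun j => P.1 ^ j * P.2 ^ (d + d - 1 - j))]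
    refine Finset.sum_congr rfl fun k _ => ?_
    rw [shift (by omega) k.is_le]
    ring

variable {Γ : Type*} [LinearOrderedAddCommMonoidWithTop Γ] (v : AddValuation R Γ)

theorem map_det_nonneg {n : Type*} [Fintype n] [DecidableEq n] (M : Matrix n n R)
    (hM : ∀ i j, 0 ≤ v (M i j)) : 0 ≤ v M.det := by
  rw [det_apply]
  refine v.map_le_sum fun σ _ => ?_
  have hprod : 0 ≤ v (∏ i, M (σ i) i) :=
    Finset.prod_induction _ (0 ≤ v ·) (fun _ _ => map_mul_nonneg v)
      (v.map_one ▸ le_rfl) fun i _ => hM (σ i) i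
  rcases Int.units_eq_one_or (Equiv.Perm.sign σ) with h | h <;> rw [h]
  · rwa [one_smul]
  · rwa [Units.neg_smul, one_smul, v.map_neg]

theorem map_adjugate_nonneg {n : Type*} [Fintype n] [DecidableEq n] (M : Matrix n n R)
    (hM : ∀ i j, 0 ≤ v (M i j)) (i j : n) : 0 ≤ v (M.adjugate i j) := by
  rw [adjugate_apply]
  refine map_det_nonneg v _ fun k l => ?_
  rw [updateRow_apply]
  split_ifs
  · rw [Pi.single_apply]
    split_ifs
    · rw [v.map_one]
    · rw [v.map_zero]; exact le_top
  · exact hM k l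

theorem map_sylvester_nonneg (hab : ∀ i, 0 ≤ v (a i) ∧ 0 ≤ v (b i)) (i j : Fin (d+d)) :
    0 ≤ v (sylvester d a b i j) := by
  unfold sylvester
  split_ifs
  exacts [(hab _).1, v.map_zero ▸ le_top, (hab _).2, v.map_zero ▸ le_top]

theorem isNormalized_evalPair (hd : 1 ≤ d) (hab : ∀ i, 0 ≤ v (a i) ∧ 0 ≤ v (b i))
    (hres : v (resultant d a b) = 0) {P : R × R} (hP : IsNormalized v P) :
    IsNormalized v (evalPair d a b P) := by
  set M := sylvester d a b
  set w : Fin (d+d) → R := fun j => P.1 ^ (j:ℕ) * P.2 ^ (d + d - 1 - j)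
  refine le_antisymm ?_ (le_min (map_form_nonneg v (fun i => (hab i).1) hP)
    (map_form_nonneg v (fun i => (hab i).2) hP))
  obtain ⟨r, hr⟩ : ∃ r, v (w r) = 0 := by
    rcases hP.fst_eq_zero_or_snd_eq_zero with h | h
    · exact ⟨⟨d + d - 1, by omega⟩, by simp [w, v.map_pow, h]⟩
    · exact ⟨⟨0, by omega⟩, by simp [w, v.map_pow, h]⟩
  have hcramer : M.det * w r = ∑ i, M.adjugate r i * (M *ᵥ w) i := by
    change (M.det • w) r = (M.adjugate *ᵥ (M *ᵥ w)) r
    rw [mulVec_mulVec, adjugate_mul, smul_mulVec, one_mulVec]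
  calc min (v (evalPair d a b P).1) (v (evalPair d a b P).2)
      ≤ v (∑ i, M.adjugate r i * (M *ᵥ w) i) := v.map_le_sum fun i _ => by
        rw [v.map_mul, sylvester_mulVec_apply]
        refine le_add_of_nonneg_of_le
          (map_adjugate_nonneg v M (map_sylvester_nonneg a b v hab) r i) ?_
        split_ifs <;> rw [v.map_mul] <;> refine le_add_of_nonneg_of_le
          (map_pow_mul_pow_nonneg v hP.fst_nonneg hP.snd_nonneg _ _) ?_
        exacts [min_le_left _ _, min_le_right _ _]
    _ = 0 := by rw [← hcramer, v.map_mul, ← resultant, hres, hr, add_zero]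

end Resultant

namespace GoodReduction

variable {K : Type} [Field K] {v : AddValuation K (WithTop ℤ)} {d : ℕ} {a b : Fin (d+1) → K}

theorem evalPair_ne_zero (hgood : GoodReduction v d a b) (hd : 1 ≤ d) {P : K × K}
    (hP : P ≠ 0) : evalPair d a b P ≠ 0 := by
  obtain ⟨u, -, hint, -, hres⟩ := hgood
  obtain ⟨c, -, hcP⟩ := exists_isNormalized_smul v hP
  have hne := (isNormalized_evalPair _ _ v hd hint hres hcP).ne_zero
  rw [evalPair_const_mul, evalPair_smul, smul_smul] at hne
  exact fun h => hne (by rw [h, smul_zero])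

theorem logDist_le_logDist_evalPair (hgood : GoodReduction v d a b) (hd : 1 ≤ d) {P Q : K × K}
    (hP : P ≠ 0) (hQ : Q ≠ 0) :
    logDist v P Q ≤ logDist v (evalPair d a b P) (evalPair d a b Q) := by
  obtain ⟨u, hu, hint, -, hres⟩ := hgood
  obtain ⟨α, hα, hαP⟩ := exists_isNormalized_smul v hP
  obtain ⟨β, hβ, hβQ⟩ := exists_isNormalized_smul v hQ
  set ψ := evalPair d (fun i => u * a i) (fun i => u * b i)
  calc logDist v P Q = v (cross (α • P) (β • Q)) := by
        rw [← logDist_eq_of_isNormalized v hαP hβQ, logDist_smul_smul v hα hβ]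
    _ ≤ v (cross (ψ (α • P)) (ψ (β • Q))) := map_cross_le_map_cross_evalPair _ _ v hint hαP hβQ
    _ = logDist v (evalPair d a b P) (evalPair d a b Q) := by
        rw [← logDist_eq_of_isNormalized v (isNormalized_evalPair _ _ v hd hint hres hαP)
            (isNormalized_evalPair _ _ v hd hint hres hβQ), evalPair_const_mul,
          evalPair_const_mul, evalPair_smul, evalPair_smul, smul_smul, smul_smul,
          logDist_smul_smul v (mul_ne_zero hu (pow_ne_zero d hα))
            (mul_ne_zero hu (pow_ne_zero d hβ))]

end GoodReduction

section OrbitDistance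

variable {α : Type*} [LinearOrder α] {n : ℕ}

theorem apply_eq_apply_one_of_coprime {E : ℕ → α} (hn : n ≠ 0) (hper : Function.Periodic E n)
    (hzero : ∀ s, E s ≤ E 0) (hadd : ∀ s t, min (E s) (E t) ≤ E (s + t)) {k : ℕ}
    (hk : k.Coprime n) : E k = E 1 := by
  have hmul : ∀ s m, E s ≤ E (m * s) := by
    intro s m
    induction m with
    | zero => simpa using hzero s
    | succ m ih => exact (le_min ih le_rfl).trans (by rw [add_one_mul]; exact hadd _ _)
  obtain ⟨m, -, hm⟩ := Nat.exists_mul_mod_eq_of_coprime 1 hk hn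
  refine le_antisymm ?_ ?_
  · rw [← hper.map_mod_nat 1, ← hm, hper.map_mod_nat, mul_comm]
    exact hmul k m
  · simpa using hmul 1 k

variable {D : ℕ → ℕ → α}

theorem apply_succ_succ_of_mono_of_periodic (hn : 0 < n) (hsymm : ∀ k l, D k l = D l k)
    (hmono : ∀ k l, D k l ≤ D (k + 1) (l + 1)) (hper : ∀ k l, D (k + n) l = D k l) (k l : ℕ) :
    D (k + 1) (l + 1) = D k l := by
  have hmono' : Monotone fun t => D (k + 1 + t) (l + 1 + t) :=
    monotone_nat_of_le_succ fun t => hmono _ _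
  refine le_antisymm ?_ (hmono k l)
  calc D (k + 1) (l + 1) ≤ D (k + 1 + (n - 1)) (l + 1 + (n - 1)) := hmono' (Nat.zero_le _)
    _ = D (k + n) (l + n) := by rw [show k + 1 + (n - 1) = k + n by omega,
        show l + 1 + (n - 1) = l + n by omega]
    _ = D k l := by rw [hper, hsymm, hper, hsymm]

theorem apply_eq_apply_one_zero_of_gcd_sub_eq_one (hn : 0 < n) (hsymm : ∀ k l, D k l = D l k)
    (hultra : ∀ k l m, min (D k l) (D l m) ≤ D k m) (hmono : ∀ k l, D k l ≤ D (k + 1) (l + 1))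
    (hper : ∀ k l, D (k + n) l = D k l) {i j : ℕ} (hij : Int.gcd ((i : ℤ) - (j : ℤ)) n = 1) :
    D i j = D 1 0 := by
  wlog hji : j ≤ i generalizing i j
  · rw [hsymm]
    exact this (by rwa [← Int.neg_gcd, neg_sub]) (le_of_not_ge hji)
  have hshift : ∀ k m, D (k + m) m = D k 0 := by
    intro k m
    induction m with
    | zero => rfl
    | succ m ih =>
      rw [← add_assoc, apply_succ_succ_of_mono_of_periodic hn hsymm hmono hper, ih]
  obtain ⟨k, rfl⟩ := Nat.exists_eq_add_of_le hji
  rw [add_comm, hshift]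
  refine apply_eq_apply_one_of_coprime (E := (D · 0)) hn.ne' (hper · 0) (fun s => ?_)
    (fun s t => ?_) (by simpa [Int.gcd_natCast_natCast] using hij)
  · simpa [hsymm s 0] using hultra 0 s 0
  · simpa [hshift] using hultra (s + t) t 0

end OrbitDistance

theorem logDist_iterate_coprime_general {K : Type} [Field K] (v : K → WithTop ℤ)
    (hv0 : v 0 = ⊤) (hvfin : ∀ x : K, x ≠ 0 → v x ≠ ⊤)
    (hvmul : ∀ x y : K, v (x * y) = v x + v y)
    (hvadd : ∀ x y : K, min (v x) (v y) ≤ v (x + y))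
    (d : ℕ) (hd : 1 ≤ d) (a b : Fin (d+1) → K)
    (hgood : GoodReduction v d a b)
    (P : K × K) (hP : P ≠ (0, 0)) (n : ℕ) (hn : 0 < n)
    (hper : ∃ c : K, c ≠ 0 ∧ (evalPair d a b)^[n] P = c • P)
    (i j : ℕ) (hij : Int.gcd ((i : ℤ) - (j : ℤ)) (n : ℤ) = 1) :
    logDist v ((evalPair d a b)^[i] P) ((evalPair d a b)^[j] P) =
      logDist v (evalPair d a b P) P := by
  have hv1 : v 1 = 0 := by
    have h := hvmul 1 1
    rw [one_mul] at h
    exact (add_right_inj_of_ne_top (hvfin 1 one_ne_zero)).1 (h.symm.trans (add_zero _).symm)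
  let w : AddValuation K (WithTop ℤ) := AddValuation.of v hv0 hv1 hvadd hvmul
  obtain ⟨c, hc, hcyc⟩ := hper
  set φ := evalPair d a b
  have horbit : ∀ k, φ^[k] P ≠ 0 := by
    intro k
    induction k with
    | zero => exact hP
    | succ k ih => rw [Function.iterate_succ_apply']; exact hgood.evalPair_ne_zero (v := w) hd ih
  refine apply_eq_apply_one_zero_of_gcd_sub_eq_one (D := fun k l => logDist w (φ^[k] P) (φ^[l] P)) hn
    (fun k l => logDist_comm w _ _)
    (fun k l m => min_logDist_le w (horbit k) (horbit l) (horbit m))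
    (fun k l => ?_) (fun k l => ?_) hij
  · simp only [Function.iterate_succ_apply']
    exact hgood.logDist_le_logDist_evalPair (v := w) hd (horbit k) (horbit l)
  · rw [Function.iterate_add_apply, hcyc, iterate_evalPair_smul,
      logDist_smul_left w (pow_ne_zero _ hc)]

/-- Let `φ` be a morphism of `ℙ¹` defined over `K` with good reduction at the place
`v`, and let `P ∈ ℙ¹(K)` be a periodic point of `φ` with minimal period `n`.  If
`i, j ∈ ℕ` satisfy `gcd(i − j, n) = 1`, then `δ_v(φ^i(P), φ^j(P)) = δ_v(φ(P), P)`. -/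
theorem logDist_iterate_coprime {K : Type} [Field K] (v : K → WithTop ℤ)
    (hv0 : v 0 = ⊤) (hvfin : ∀ x : K, x ≠ 0 → v x ≠ ⊤)
    (hvmul : ∀ x y : K, v (x * y) = v x + v y)
    (hvadd : ∀ x y : K, min (v x) (v y) ≤ v (x + y))
    (hvdisc : ∀ n : ℤ, ∃ x : K, v x = (n : WithTop ℤ))
    (d : ℕ) (hd : 1 ≤ d) (a b : Fin (d+1) → K)
    (hgood : GoodReduction v d a b)
    (P : K × K) (hP : P ≠ (0, 0)) (n : ℕ) (hn : 0 < n)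
    (hper : ∃ c : K, c ≠ 0 ∧ (evalPair d a b)^[n] P = c • P)
    (hmin : ∀ m : ℕ, 0 < m →
      (∃ c : K, c ≠ 0 ∧ (evalPair d a b)^[m] P = c • P) → n ≤ m)
    (i j : ℕ) (hij : Int.gcd ((i : ℤ) - (j : ℤ)) (n : ℤ) = 1) :
    logDist v ((evalPair d a b)^[i] P) ((evalPair d a b)^[j] P) =
      logDist v (evalPair d a b P) P :=
  logDist_iterate_coprime_general v hv0 hvfin hvmul hvadd d hd a b hgood P hP n hn hper i j hij
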